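/- Let v(t) be a negative convex function on ℝ₋ᵏ (k > 1) that is increasing in each variable t_i. Then liminf_{t→−∞} v(t)/(t₁+⋯+t_k) equals the minimum over i of liminf_{t_i→−∞} v(t)/t_i. -/

import Mathlib

open Filter Topology MeasureTheory

noncomputable section

/-- `ℂⁿ`. -/
abbrev Cn (n : ℕ) := Fin n → ℂ

/-- Plurisubharmonicity on a set: upper semicontinuity together with the
sub-mean value inequality over circles lying in complex lines inside the set. -/
def PSHOn {n : ℕ} (u : Cn n → ℝ) (D : Set (Cn n)) : Prop :=
  UpperSemicontinuousOn u D ∧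
    ∀ z w : Cn n, ∀ r : ℝ, 0 < r →
      (∀ ζ : ℂ, ‖ζ‖ ≤ r → z + ζ • w ∈ D) →
      u z ≤ (2 * Real.pi)⁻¹ *
        ∫ θ in (0:ℝ)..2 * Real.pi, u (z + ((r : ℂ) * Complex.exp (θ * Complex.I)) • w)

/-- Maximality on an open set: `u` dominates every plurisubharmonic competitor on
relatively compact subdomains, given boundary comparison. -/
def MaximalOn {n : ℕ} (u : Cn n → ℝ) (Ω : Set (Cn n)) : Prop :=
  ∀ G : Set (Cn n), IsOpen G → IsCompact (closure G) → closure G ⊆ Ω →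
    ∀ v : Cn n → ℝ, PSHOn v G →
      (∀ p ∈ frontier G, limsup v (𝓝[G] p) ≤ u p) →
      ∀ z ∈ G, v z ≤ u z

/-- The relative type `σ(u,φ) = liminf_{z→x} u(z)/φ(z)`. -/
def relType {n : ℕ} (x : Cn n) (u φ : Cn n → ℝ) : ℝ :=
  liminf (fun z => u z / φ z) (𝓝[≠] x)

/-- Boundedness near `x` (off `x`). -/
def BddNear {n : ℕ} (x : Cn n) (f : Cn n → ℝ) : Prop :=
  ∃ U ∈ 𝓝 x, ∃ C : ℝ, ∀ z ∈ U, z ≠ x → |f z| ≤ C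

/-- `u ≤ v + O(1)` near `x`. -/
def LeO1 {n : ℕ} (x : Cn n) (u v : Cn n → ℝ) : Prop :=
  ∃ U ∈ 𝓝 x, ∃ C : ℝ, ∀ z ∈ U, z ≠ x → u z ≤ v z + C

/-- `u = v + O(1)` near `x`. -/
def EqO1 {n : ℕ} (x : Cn n) (u v : Cn n → ℝ) : Prop :=
  LeO1 x u v ∧ LeO1 x v u

/-- A weight at `x`: plurisubharmonic near `x` and singular at `x`. -/
def IsWeight {n : ℕ} (x : Cn n) (φ : Cn n → ℝ) : Prop :=
  ∃ U ∈ 𝓝 x, PSHOn φ (U \ {x}) ∧ Tendsto φ (𝓝[≠] x) atBot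

/-- A maximal weight at `x`. -/
def IsMaxWeight {n : ℕ} (x : Cn n) (φ : Cn n → ℝ) : Prop :=
  ∃ U ∈ 𝓝 x, PSHOn φ (U \ {x}) ∧ MaximalOn φ (U \ {x}) ∧ Tendsto φ (𝓝[≠] x) atBot

/-- Local boundedness on a set. -/
def LocBddOn {n : ℕ} (u : Cn n → ℝ) (S : Set (Cn n)) : Prop :=
  ∀ z ∈ S, ∃ U ∈ 𝓝 z, ∃ C : ℝ, ∀ w ∈ U ∩ S, |u w| ≤ C

/-- Analytic singularity: `φ = c·log|F| + O(1)` with `F` holomorphic having an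
isolated zero at `x`. -/
def HasAnalyticSing {n : ℕ} (x : Cn n) (φ : Cn n → ℝ) : Prop :=
  ∃ c : ℝ, 0 < c ∧ ∃ (N : ℕ) (F : Cn n → Fin N → ℂ), ∃ U ∈ 𝓝 x,
    DifferentiableOn ℂ F U ∧ F x = 0 ∧ (∀ z ∈ U, z ≠ x → F z ≠ 0) ∧
    BddNear x (fun z => φ z - c * Real.log ‖F z‖)

/-- Asymptotically analytic singularity: approximation by analytic weights in the
sense `(1+ε)ψ_ε + O(1) ≤ ψ ≤ (1−ε)ψ_ε + O(1)`. -/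
def AsympAnalytic {n : ℕ} (x : Cn n) (ψ : Cn n → ℝ) : Prop :=
  ∀ ε : ℝ, 0 < ε → ∃ φ : Cn n → ℝ, IsWeight x φ ∧ HasAnalyticSing x φ ∧
    LeO1 x (fun z => (1 + ε) * φ z) ψ ∧ LeO1 x ψ (fun z => (1 - ε) * φ z)

/-- A bounded hyperconvex domain. -/
def Hyperconvex {n : ℕ} (D : Set (Cn n)) : Prop :=
  IsOpen D ∧ Bornology.IsBounded D ∧ D.Nonempty ∧
    ∃ ρ : Cn n → ℝ, PSHOn ρ D ∧ ContinuousOn ρ D ∧ (∀ z ∈ D, ρ z < 0) ∧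
      ∀ c : ℝ, c < 0 → IsCompact (closure {z ∈ D | ρ z ≤ c}) ∧
        closure {z ∈ D | ρ z ≤ c} ⊆ D

/-- Zero boundary values. -/
def ZeroOnBoundary {n : ℕ} (D : Set (Cn n)) (u : Cn n → ℝ) : Prop :=
  ∀ p ∈ frontier D, Tendsto u (𝓝[D] p) (𝓝 0)

/-- The Green–Zahariuta function of `D` with singularity `φ` at `x`. -/
def Green {n : ℕ} (D : Set (Cn n)) (x : Cn n) (φ : Cn n → ℝ) (z : Cn n) : ℝ :=
  sSup {t : ℝ | ∃ v : Cn n → ℝ, PSHOn v D ∧ (∀ w ∈ D, v w ≤ 0) ∧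
    1 ≤ relType x v φ ∧ t = v z}

/-- The complete greenification of `ψ` at `x` in `D`. -/
def greenification {n : ℕ} (D : Set (Cn n)) (x : Cn n) (ψ : Cn n → ℝ) (z : Cn n) : ℝ :=
  limsup (fun y => sSup {t : ℝ | ∃ v : Cn n → ℝ, PSHOn v D ∧ (∀ w ∈ D, v w ≤ 0) ∧
    LeO1 x v ψ ∧ t = v y}) (𝓝 z)

/-- Demailly's approximation `𝔇_k u`. -/
def Demailly {n : ℕ} (D : Set (Cn n)) (k : ℕ) (u : Cn n → ℝ) (z : Cn n) : ℝ :=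
  (k : ℝ)⁻¹ * sSup {t : ℝ | ∃ f : Cn n → ℂ, DifferentiableOn ℂ f D ∧
    (∫⁻ w in D, ENNReal.ofReal (‖f w‖ ^ 2 * Real.exp (-2 * k * u w))) < 1 ∧
    t = Real.log ‖f z‖}

/-- An abstract complex Monge–Ampère operator with the standard properties used in the
paper: characterization of maximality, the comparison principle, and continuity of the
residual masses along monotone sequences. -/
structure MAData (n : ℕ) where
  ma : (Cn n → ℝ) → Measure (Cn n)
  max_iff : ∀ (u : Cn n → ℝ) (Ω : Set (Cn n)), IsOpen Ω → PSHOn u Ω →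
      (MaximalOn u Ω ↔ ma u Ω = 0)
  comparison : ∀ (D : Set (Cn n)) (u v : Cn n → ℝ), IsOpen D →
      Bornology.IsBounded D → PSHOn u D → PSHOn v D →
      closure {z ∈ D | u z < v z} ⊆ D →
      ma v {z ∈ D | u z < v z} ≤ ma u {z ∈ D | u z < v z}
  cont_dec : ∀ (D : Set (Cn n)) (x : Cn n) (u : ℕ → Cn n → ℝ) (v : Cn n → ℝ),
      IsOpen D → x ∈ D → (∀ j, PSHOn (u j) (D \ {x})) → PSHOn v (D \ {x}) →
      (∀ j z, u (j + 1) z ≤ u j z) →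
      (∀ z ∈ D \ {x}, Tendsto (fun j => u j z) atTop (𝓝 (v z))) →
      Tendsto (fun j => ma (u j) {x}) atTop (𝓝 (ma v {x}))
  cont_inc : ∀ (D : Set (Cn n)) (x : Cn n) (u : ℕ → Cn n → ℝ) (v : Cn n → ℝ),
      IsOpen D → x ∈ D → (∀ j, PSHOn (u j) (D \ {x})) → PSHOn v (D \ {x}) →
      (∀ j z, u j z ≤ u (j + 1) z) →
      (∀ z ∈ D \ {x}, limsup (fun y => ⨆ j, u j y) (𝓝 z) = v z) →
      Tendsto (fun j => ma (u j) {x}) atTop (𝓝 (ma v {x}))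


/-!
Write `σᵢ` for the `i`-th liminf on the right and `m = minᵢ σᵢ`. Convexity and negativity of `v`
give `v (R • t) ≥ R * v t` for `R ≥ 1`, so a ratio `v t / ℓ t` with `ℓ` linear and negative on the
orthant (`ℓ = ∑` or `ℓ = tᵢ`) can only decrease along rays; hence every such liminf is at most
the ratio at any point of the orthant. Since `∑ t ≤ tᵢ`, this gives the upper bound `σᵢ` for the
left-hand side, and also `v u ≤ m * uⱼ` on the whole orthant. Writing `t` as an average of points
with all coordinates but one equal to `-1`, Jensen's inequality turns the latter into
`v t ≤ m * (∑ t + k - 1)`, whence the lower bound `m`.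
-/

section Ray

variable {E : Type*} [AddCommGroup E] [Module ℝ E] {s : Set E} {f ℓ : E → ℝ} {x : E}
  {F : Filter E}

theorem ConvexOn.mul_le_apply_smul_of_nonpos (hf : ConvexOn ℝ s f)
    (hs : ∀ c : ℝ, 0 < c → ∀ x ∈ s, c • x ∈ s) (hf₀ : ∀ x ∈ s, f x ≤ 0) (hx : x ∈ s)
    {R : ℝ} (hR : 1 ≤ R) : R * f x ≤ f (R • x) := by
  -- `x` is a convex combination of `R • x` and `δ • x`, and `f (δ • x) ≤ 0`; then let `δ → 0`.
  have key : ∀ δ ∈ Set.Ioo (0 : ℝ) 1, (R - δ) * f x ≤ (1 - δ) * f (R • x) := by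
    rintro δ ⟨hδ₀, hδ₁⟩
    have hRδ : 0 < R - δ := by linarith
    have hcomb : ((1 - δ) / (R - δ)) • (R • x) + ((R - 1) / (R - δ)) • (δ • x) = x := by
      rw [smul_smul, smul_smul, ← add_smul]
      convert one_smul ℝ x using 2
      field_simp
      ring
    have hjensen : f (((1 - δ) / (R - δ)) • (R • x) + ((R - 1) / (R - δ)) • (δ • x)) ≤
        ((1 - δ) / (R - δ)) * f (R • x) + ((R - 1) / (R - δ)) * f (δ • x) :=
      hf.2 (hs R (by linarith) x hx) (hs δ hδ₀ x hx)
        (div_nonneg (by linarith) hRδ.le) (div_nonneg (by linarith) hRδ.le) (by field_simp; ring)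
    rw [hcomb] at hjensen
    have hδx := hf₀ _ (hs δ hδ₀ x hx)
    have := mul_le_mul_of_nonneg_left hjensen hRδ.le
    rw [mul_add, ← mul_assoc, ← mul_assoc, mul_div_cancel₀ _ hRδ.ne',
      mul_div_cancel₀ _ hRδ.ne'] at this
    nlinarith
  have hlim (c a : ℝ) : Tendsto (fun δ : ℝ => (c - δ) * a) (𝓝[>] 0) (𝓝 (c * a)) :=
    ((by fun_prop : Continuous fun δ : ℝ => (c - δ) * a).tendsto' 0 _ (by simp)).mono_left
      nhdsWithin_le_nhds
  exact le_of_tendsto_of_tendsto (hlim R (f x)) (by simpa using hlim 1 (f (R • x)))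
    (eventually_of_mem (Ioo_mem_nhdsGT one_pos) key)

theorem ConvexOn.apply_smul_div_le (hf : ConvexOn ℝ s f)
    (hs : ∀ c : ℝ, 0 < c → ∀ x ∈ s, c • x ∈ s) (hf₀ : ∀ x ∈ s, f x ≤ 0)
    (hℓ : ∀ x ∈ s, ℓ x < 0) (hℓ_smul : ∀ (c : ℝ) x, ℓ (c • x) = c * ℓ x) (hx : x ∈ s)
    {R : ℝ} (hR : 1 ≤ R) : f (R • x) / ℓ (R • x) ≤ f x / ℓ x := by
  rw [hℓ_smul, ← mul_div_mul_left (f x) (ℓ x) (by positivity : R ≠ 0)]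
  exact div_le_div_of_nonpos_of_le (mul_neg_of_pos_of_neg (by linarith) (hℓ x hx)).le
    (hf.mul_le_apply_smul_of_nonpos hs hf₀ hx hR)

theorem ConvexOn.frequently_div_le (hf : ConvexOn ℝ s f)
    (hs : ∀ c : ℝ, 0 < c → ∀ x ∈ s, c • x ∈ s) (hf₀ : ∀ x ∈ s, f x ≤ 0)
    (hℓ : ∀ x ∈ s, ℓ x < 0) (hℓ_smul : ∀ (c : ℝ) x, ℓ (c • x) = c * ℓ x) (hx : x ∈ s)
    (hF : Tendsto (fun R : ℝ => R • x) atTop F) : ∃ᶠ y in F, f y / ℓ y ≤ f x / ℓ x :=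
  hF.frequently <| ((eventually_ge_atTop 1).mono fun _ hR =>
    hf.apply_smul_div_le hs hf₀ hℓ hℓ_smul hx hR).frequently

theorem ConvexOn.liminf_div_le (hf : ConvexOn ℝ s f)
    (hs : ∀ c : ℝ, 0 < c → ∀ x ∈ s, c • x ∈ s) (hf₀ : ∀ x ∈ s, f x ≤ 0)
    (hℓ : ∀ x ∈ s, ℓ x < 0) (hℓ_smul : ∀ (c : ℝ) x, ℓ (c • x) = c * ℓ x) (hsF : s ∈ F)
    (hx : x ∈ s) (hF : Tendsto (fun R : ℝ => R • x) atTop F) :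
    liminf (fun y => f y / ℓ y) F ≤ f x / ℓ x :=
  liminf_le_of_frequently_le (hf.frequently_div_le hs hf₀ hℓ hℓ_smul hx hF)
    ⟨0, eventually_map.2 <| mem_of_superset hsF fun y hy =>
      div_nonneg_of_nonpos (hf₀ y hy) (hℓ y hy).le⟩

theorem ConvexOn.isCoboundedUnder_ge_div (hf : ConvexOn ℝ s f)
    (hs : ∀ c : ℝ, 0 < c → ∀ x ∈ s, c • x ∈ s) (hf₀ : ∀ x ∈ s, f x ≤ 0)
    (hℓ : ∀ x ∈ s, ℓ x < 0) (hℓ_smul : ∀ (c : ℝ) x, ℓ (c • x) = c * ℓ x) (hx : x ∈ s)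
    (hF : Tendsto (fun R : ℝ => R • x) atTop F) :
    IsCoboundedUnder (· ≥ ·) F (fun y => f y / ℓ y) :=
  IsCoboundedUnder.of_frequently_le (hf.frequently_div_le hs hf₀ hℓ hℓ_smul hx hF)

end Ray

def negOrthant (ι : Type*) : Set (ι → ℝ) := {t | ∀ i, t i < 0}

section Orthant

variable {ι : Type*}

theorem smul_mem_negOrthant : ∀ c : ℝ, 0 < c → ∀ t ∈ negOrthant ι, c • t ∈ negOrthant ι :=
  fun _ hc _ ht i => mul_neg_of_pos_of_neg hc (ht i)

theorem tendsto_smul_atTop_pi_atBot {t : ι → ℝ} (ht : t ∈ negOrthant ι) :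
    Tendsto (fun R : ℝ => R • t) atTop
      ((Filter.pi fun _ : ι => (atBot : Filter ℝ)) ⊓ 𝓟 (negOrthant ι)) :=
  tendsto_inf.2 ⟨tendsto_pi.2 fun i => tendsto_id.atTop_mul_const_of_neg (ht i),
    tendsto_principal.2 <| (eventually_gt_atTop 0).mono fun _ hR => smul_mem_negOrthant _ hR _ ht⟩

theorem tendsto_smul_atTop_comap_apply_atBot {t : ι → ℝ} (ht : t ∈ negOrthant ι) (i : ι) :
    Tendsto (fun R : ℝ => R • t) atTop
      (comap (fun u => u i) atBot ⊓ 𝓟 (negOrthant ι)) :=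
  (tendsto_smul_atTop_pi_atBot ht).mono_right
    (inf_le_inf_right _ (tendsto_eval_pi _ i).le_comap)

theorem ConvexOn.liminf_div_apply_le {f : (ι → ℝ) → ℝ} (hf : ConvexOn ℝ (negOrthant ι) f)
    (hf₀ : ∀ t ∈ negOrthant ι, f t ≤ 0) {t : ι → ℝ} (ht : t ∈ negOrthant ι) (i : ι) :
    liminf (fun u => f u / u i) (comap (fun u => u i) atBot ⊓ 𝓟 (negOrthant ι)) ≤ f t / t i :=
  hf.liminf_div_le smul_mem_negOrthant hf₀ (fun _ hu => hu i) (fun _ _ => rfl)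
    (mem_inf_of_right (mem_principal_self _)) ht (tendsto_smul_atTop_comap_apply_atBot ht i)

variable [Fintype ι]

theorem sum_apply_smul (c : ℝ) (t : ι → ℝ) : ∑ i, (c • t) i = c * ∑ i, t i := by
  simp [Finset.mul_sum]

theorem sum_le_apply_of_mem_negOrthant {t : ι → ℝ} (ht : t ∈ negOrthant ι) (i : ι) :
    ∑ j, t j ≤ t i := by
  simpa using Finset.single_le_sum (f := fun j => -t j) (fun j _ => (neg_pos.2 (ht j)).le)
    (Finset.mem_univ i)

theorem sum_neg_of_mem_negOrthant [Nonempty ι] {t : ι → ℝ} (ht : t ∈ negOrthant ι) :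
    ∑ i, t i < 0 :=
  Finset.sum_neg (fun i _ => ht i) Finset.univ_nonempty

theorem div_sum_le_div_apply_of_mem_negOrthant {a : ℝ} (ha : a ≤ 0) {t : ι → ℝ}
    (ht : t ∈ negOrthant ι) (i : ι) : a / ∑ j, t j ≤ a / t i := by
  simpa only [neg_div_neg_eq] using div_le_div_of_nonneg_left (neg_nonneg.2 ha)
    (neg_pos.2 (ht i)) (neg_le_neg (sum_le_apply_of_mem_negOrthant ht i))

theorem ConvexOn.le_mul_sum_add_card [Nonempty ι] {f : (ι → ℝ) → ℝ} {m : ℝ}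
    (hf : ConvexOn ℝ (negOrthant ι) f) (hm : ∀ u ∈ negOrthant ι, ∀ j, f u ≤ m * u j)
    {t : ι → ℝ} (ht : ∀ i, t i ≤ -1) :
    f t ≤ m * (∑ i, t i + ((Fintype.card ι : ℝ) - 1)) := by
  classical
  set n : ℝ := (Fintype.card ι : ℝ) with hn_def
  have hn : 0 < n := by positivity
  -- `t` is the average of the points `-1 + n (t j + 1) eⱼ` of the orthant.
  set u : ι → ι → ℝ := fun j => (Pi.single j (n * (t j + 1)) : ι → ℝ) - 1
  have hu : ∀ j, u j ∈ negOrthant ι := fun j i => by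
    rcases eq_or_ne i j with rfl | hij
    · simp only [u, Pi.sub_apply, Pi.single_eq_same, Pi.one_apply]
      nlinarith [ht i]
    · simp [u, hij]
  have havg : ∑ j, n⁻¹ • u j = t := by
    rw [← Finset.smul_sum, Finset.sum_sub_distrib, Finset.univ_sum_single, Finset.sum_const,
      Finset.card_univ]
    ext i
    simp only [nsmul_eq_mul, mul_one, Pi.smul_apply, Pi.sub_apply, Pi.natCast_apply, ← hn_def,
      smul_eq_mul]
    field_simp
    ring
  have hjensen := hf.map_sum_le (t := Finset.univ) (w := fun _ => n⁻¹) (p := u)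
    (fun _ _ => by positivity) (by simp [n]) (fun j _ => hu j)
  rw [havg] at hjensen
  calc f t ≤ ∑ j, n⁻¹ • f (u j) := hjensen
    _ ≤ ∑ j, n⁻¹ * (m * u j j) :=
      Finset.sum_le_sum fun j _ => mul_le_mul_of_nonneg_left (hm _ (hu j) j) (by positivity)
    _ = m * (∑ i, t i + (n - 1)) := by
      simp only [Pi.sub_apply, Pi.single_eq_same, Pi.one_apply, ← Finset.mul_sum,
        Finset.sum_sub_distrib, Finset.sum_add_distrib, Finset.sum_const, Finset.card_univ,
        nsmul_eq_mul, ← hn_def, mul_one, u]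
      field_simp
      ring

theorem ConvexOn.le_liminf_div_sum [Nonempty ι] {f : (ι → ℝ) → ℝ} {m : ℝ}
    (hf : ConvexOn ℝ (negOrthant ι) f) (hf₀ : ∀ t ∈ negOrthant ι, f t ≤ 0)
    (hm : ∀ u ∈ negOrthant ι, ∀ j, f u ≤ m * u j) :
    m ≤ liminf (fun t => f t / ∑ i, t i)
      ((Filter.pi fun _ : ι => (atBot : Filter ℝ)) ⊓ 𝓟 (negOrthant ι)) := by
  set F := (Filter.pi fun _ : ι => (atBot : Filter ℝ)) ⊓ 𝓟 (negOrthant ι)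
  obtain ⟨i₀⟩ := ‹Nonempty ι›
  have hray : Tendsto (fun R : ℝ => R • (fun _ => -1 : ι → ℝ)) atTop F :=
    tendsto_smul_atTop_pi_atBot fun _ => neg_one_lt_zero
  have := hray.neBot
  have hsum : Tendsto (fun t : ι → ℝ => ∑ i, t i) F atBot :=
    tendsto_atBot_mono' F (mem_of_superset (mem_inf_of_right (mem_principal_self _))
      fun t ht => sum_le_apply_of_mem_negOrthant ht i₀)
      ((tendsto_eval_pi _ i₀).mono_left inf_le_left)
  have hlim : Tendsto (fun t : ι → ℝ => m + m * ((Fintype.card ι : ℝ) - 1) / ∑ i, t i) F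
      (𝓝 m) := by
    simpa using tendsto_const_nhds.add (tendsto_const_nhds.div_atBot hsum)
  have hle : ∀ᶠ t in F, m + m * ((Fintype.card ι : ℝ) - 1) / ∑ i, t i ≤ f t / ∑ i, t i := by
    filter_upwards [(eventually_pi fun _ => eventually_le_atBot (-1)).filter_mono inf_le_left,
      mem_inf_of_right (mem_principal_self _)] with t ht htΩ
    have hs := sum_neg_of_mem_negOrthant htΩ
    rw [show m + m * ((Fintype.card ι : ℝ) - 1) / ∑ i, t i
        = m * (∑ i, t i + ((Fintype.card ι : ℝ) - 1)) / ∑ i, t i by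
          rw [mul_add, add_div, mul_div_cancel_right₀ _ hs.ne]]
    exact div_le_div_of_nonpos_of_le hs.le (hf.le_mul_sum_add_card hm ht)
  calc m = liminf _ F := hlim.liminf_eq.symm
    _ ≤ _ := liminf_le_liminf hle hlim.isBoundedUnder_ge <|
      hf.isCoboundedUnder_ge_div smul_mem_negOrthant hf₀
        (fun _ => sum_neg_of_mem_negOrthant) sum_apply_smul (fun _ => neg_one_lt_zero) hray

theorem ConvexOn.liminf_div_sum_le_liminf_div_apply [Nonempty ι] {f : (ι → ℝ) → ℝ}
    (hf : ConvexOn ℝ (negOrthant ι) f) (hf₀ : ∀ t ∈ negOrthant ι, f t ≤ 0) (i : ι) :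
    liminf (fun t => f t / ∑ j, t j)
        ((Filter.pi fun _ : ι => (atBot : Filter ℝ)) ⊓ 𝓟 (negOrthant ι)) ≤
      liminf (fun t => f t / t i) (comap (fun t => t i) atBot ⊓ 𝓟 (negOrthant ι)) := by
  have h₁ : (fun _ => -1 : ι → ℝ) ∈ negOrthant ι := fun _ => neg_one_lt_zero
  refine le_liminf_of_le (hf.isCoboundedUnder_ge_div smul_mem_negOrthant hf₀ (fun _ hu => hu i)
    (fun _ _ => rfl) h₁ (tendsto_smul_atTop_comap_apply_atBot h₁ i)) ?_
  refine eventually_inf_principal.2 (Eventually.of_forall fun t ht => ?_)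
  calc _ ≤ f t / ∑ j, t j :=
        hf.liminf_div_le smul_mem_negOrthant hf₀ (fun _ => sum_neg_of_mem_negOrthant)
          sum_apply_smul (mem_inf_of_right (mem_principal_self _)) ht
          (tendsto_smul_atTop_pi_atBot ht)
    _ ≤ f t / t i := div_sum_le_div_apply_of_mem_negOrthant (hf₀ t ht) ht i

end Orthant

theorem liminf_convex_min_general (k : ℕ) (hk : 1 < k) (Ω : Set (Fin k → ℝ))
    (hΩ : Ω = {t : Fin k → ℝ | ∀ i, t i < 0})
    (v : (Fin k → ℝ) → ℝ) (hconv : ConvexOn ℝ Ω v) (hneg : ∀ t ∈ Ω, v t < 0) :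
    liminf (fun t => v t / ∑ i, t i)
        ((Filter.pi fun _ : Fin k => (atBot : Filter ℝ)) ⊓ 𝓟 Ω) =
      ⨅ i : Fin k, liminf (fun t => v t / t i)
        ((Filter.comap (fun t => t i) atBot) ⊓ 𝓟 Ω) := by
  obtain rfl : Ω = negOrthant (Fin k) := hΩ
  have : Nonempty (Fin k) := ⟨⟨0, by omega⟩⟩
  have hv₀ : ∀ t ∈ negOrthant (Fin k), v t ≤ 0 := fun t ht => (hneg t ht).le
  refine le_antisymm (le_ciInf fun i => hconv.liminf_div_sum_le_liminf_div_apply hv₀ i)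
    (hconv.le_liminf_div_sum hv₀ fun u hu j => ?_)
  calc v u ≤ _ * u j := (le_div_iff_of_neg (hu j)).1 (hconv.liminf_div_apply_le hv₀ hu j)
    _ ≤ _ := mul_le_mul_of_nonpos_right (ciInf_le (Finite.bddBelow_range _) j) (hu j).le

/-- for a negative convex function `v` on the negative orthant, increasing in
each variable, `liminf_{t→−∞} v(t)/(t₁+⋯+t_k)` equals the minimum over `i` of
`liminf_{t_i→−∞} v(t)/t_i`. -/
theorem liminf_convex_min (k : ℕ) (hk : 1 < k) (Ω : Set (Fin k → ℝ))
    (hΩ : Ω = {t : Fin k → ℝ | ∀ i, t i < 0})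
    (v : (Fin k → ℝ) → ℝ) (hconv : ConvexOn ℝ Ω v) (hneg : ∀ t ∈ Ω, v t < 0)
    (hmono : ∀ t ∈ Ω, ∀ i : Fin k, ∀ s : ℝ, t i ≤ s → s < 0 →
      v t ≤ v (Function.update t i s)) :
    liminf (fun t => v t / ∑ i, t i)
        ((Filter.pi fun _ : Fin k => (atBot : Filter ℝ)) ⊓ 𝓟 Ω) =
      ⨅ i : Fin k, liminf (fun t => v t / t i)
        ((Filter.comap (fun t => t i) atBot) ⊓ 𝓟 Ω) :=
  liminf_convex_min_general k hk Ω hΩ v hconv hneg
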